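/- arXiv:1312.0258 — 5 statements merged into one kernel-verified Lean document; each statement's English description precedes it below -/
import Mathlib

section
/- If χ > χ₀ := min over positive integers k of χ_k, where χ_k = (D₁(kπ/L)² + ū)(D₂(kπ/L)² + 1)/(Φ(ū,v̄)(kπ/L)² h′(ū)), then there exists a positive integer k such that the 2×2 real matrix H_k = [[−D₁(kπ/L)² − ū, χΦ(ū,v̄)(kπ/L)²], [h′(ū), −D₂(kπ/L)² − 1]] has a real eigenvalue λ > 0 (so the constant steady state (ū, v̄) is linearly unstable). -/
/-!
Only the sign of the determinant matters. The hypothesis on `χ` gives a mode `k` with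
`χ_k < χ`, which, after clearing the positive denominator, says exactly that `det H_k < 0`.
A real `2 × 2` matrix with negative determinant has eigenvalues of opposite signs: its
characteristic polynomial `λ² - (tr H) λ + det H` is negative at `0`, hence has a positive root.
-/

open Real Set

lemma exists_pos_root_of_const_neg {T d : ℝ} (hd : d < 0) :
    ∃ x : ℝ, 0 < x ∧ x ^ 2 - T * x + d = 0 := by
  have hdisc : 0 ≤ T ^ 2 - 4 * d := by nlinarith [sq_nonneg T]
  set s := √(T ^ 2 - 4 * d)
  have hs : s ^ 2 = T ^ 2 - 4 * d := sq_sqrt hdisc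
  have hTs : -T < s := by nlinarith [sqrt_nonneg (T ^ 2 - 4 * d)]
  exact ⟨(T + s) / 2, by linarith, by linear_combination hs / 4⟩

namespace Matrix

lemma det_fin_two_sub_smul_one (A : Matrix (Fin 2) (Fin 2) ℝ) (x : ℝ) :
    (A - x • 1).det = x ^ 2 - A.trace * x + A.det := by
  simp only [det_fin_two, trace_fin_two, sub_apply, smul_apply, smul_eq_mul, one_apply_eq,
    one_apply_ne zero_ne_one, one_apply_ne one_ne_zero, mul_one, mul_zero, sub_zero]
  ring

lemma exists_pos_eigenvalue_of_det_neg {A : Matrix (Fin 2) (Fin 2) ℝ} (hA : A.det < 0) :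
    ∃ lam : ℝ, 0 < lam ∧ ∃ w : Fin 2 → ℝ, w ≠ 0 ∧ A *ᵥ w = lam • w := by
  obtain ⟨lam, hlam, hroot⟩ := exists_pos_root_of_const_neg (T := A.trace) hA
  have hsing : (A - lam • 1).det = 0 := by rw [det_fin_two_sub_smul_one, hroot]
  obtain ⟨w, hw, hker⟩ := exists_mulVec_eq_zero_iff.mpr hsing
  refine ⟨lam, hlam, w, hw, ?_⟩
  rwa [sub_mulVec, smul_mulVec, one_mulVec, sub_eq_zero] at hker

end Matrix

lemma det_linearization_neg {D₁ D₂ χ ubar Φb hb σ : ℝ} (hσ : 0 < σ) (hΦb : 0 < Φb)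
    (hhb : 0 < hb) (hχ : (D₁ * σ + ubar) * (D₂ * σ + 1) / (Φb * σ * hb) < χ) :
    (!![-(D₁ * σ) - ubar, χ * Φb * σ; hb, -(D₂ * σ) - 1]).det < 0 := by
  rw [div_lt_iff₀ (by positivity)] at hχ
  rw [Matrix.det_fin_two_of]
  linarith

theorem stmt1_general (D₁ D₂ χ ubar L Φb hb : ℝ)
    (hL : 0 < L)
    (hΦb : 0 < Φb) (hhb : 0 < hb)
    (hχ : sInf {c : ℝ | ∃ k : ℕ, 0 < k ∧
        c = (D₁ * ((k : ℝ) * π / L) ^ 2 + ubar) * (D₂ * ((k : ℝ) * π / L) ^ 2 + 1) /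
            (Φb * ((k : ℝ) * π / L) ^ 2 * hb)} < χ) :
    ∃ k : ℕ, 0 < k ∧ ∃ lam : ℝ, 0 < lam ∧ ∃ w : Fin 2 → ℝ, w ≠ 0 ∧
      Matrix.mulVec
        !![-(D₁ * ((k : ℝ) * π / L) ^ 2) - ubar, χ * Φb * ((k : ℝ) * π / L) ^ 2;
           hb, -(D₂ * ((k : ℝ) * π / L) ^ 2) - 1] w = lam • w := by
  obtain ⟨_, ⟨k, hk, rfl⟩, hkχ⟩ := exists_lt_of_csInf_lt (by exact ⟨_, 1, one_pos, rfl⟩) hχ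
  have hσ : 0 < ((k : ℝ) * π / L) ^ 2 := by
    have : (0 : ℝ) < k := Nat.cast_pos.mpr hk
    positivity
  exact ⟨k, hk, Matrix.exists_pos_eigenvalue_of_det_neg (det_linearization_neg hσ hΦb hhb hkχ)⟩

/-- If `χ` exceeds `χ₀ = min over k ≥ 1 of χ_k`, then for some positive integer `k`
the linearization matrix `H_k` has a real eigenvalue `λ > 0`, so the constant steady
state `(ū, v̄)` is linearly unstable. -/
theorem stmt1 (D₁ D₂ χ ubar L Φb hb : ℝ)
    (hD₁ : 0 < D₁) (hD₂ : 0 < D₂) (hχpos : 0 < χ) (hubar : 0 < ubar) (hL : 0 < L)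
    (hΦb : 0 < Φb) (hhb : 0 < hb)
    (hχ : sInf {c : ℝ | ∃ k : ℕ, 0 < k ∧
        c = (D₁ * ((k : ℝ) * π / L) ^ 2 + ubar) * (D₂ * ((k : ℝ) * π / L) ^ 2 + 1) /
            (Φb * ((k : ℝ) * π / L) ^ 2 * hb)} < χ) :
    ∃ k : ℕ, 0 < k ∧ ∃ lam : ℝ, 0 < lam ∧ ∃ w : Fin 2 → ℝ, w ≠ 0 ∧
      Matrix.mulVec
        !![-(D₁ * ((k : ℝ) * π / L) ^ 2) - ubar, χ * Φb * ((k : ℝ) * π / L) ^ 2;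
           hb, -(D₂ * ((k : ℝ) * π / L) ^ 2) - 1] w = lam • w :=
  stmt1_general D₁ D₂ χ ubar L Φb hb hL hΦb hhb hχ
end

section
/- For positive integers j ≠ k, one has χ_j = χ_k if and only if ū = j²k²D₁D₂(π/L)⁴, where χ_k = (D₁(kπ/L)² + ū)(D₂(kπ/L)² + 1)/(Φ(ū,v̄)(kπ/L)² h′(ū)). Equivalently, the bifurcation values χ_k are pairwise distinct (χ_k ≠ χ_j for all j ≠ k) precisely when ū ≠ j²k²D₁D₂(π/L)⁴ for all positive integers j ≠ k. -/
open Real Set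

/-! Writing `x = (jπ/L)²`, `y = (kπ/L)²`, cross-multiplying `χ_j = χ_k` leaves
`(x - y)(D₁D₂xy - ū)Φh = 0`; for `j ≠ k` the first factor does not vanish. -/

theorem div_eq_div_iff_eq_mul_mul {D₁ D₂ u Φ h x y : ℝ} (hΦ : Φ ≠ 0) (hh : h ≠ 0)
    (hx : x ≠ 0) (hy : y ≠ 0) (hxy : x ≠ y) :
    (D₁ * x + u) * (D₂ * x + 1) / (Φ * x * h) = (D₁ * y + u) * (D₂ * y + 1) / (Φ * y * h) ↔
      u = D₁ * D₂ * x * y := by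
  rw [div_eq_div_iff (by positivity) (by positivity)]
  have hfactor : (D₁ * x + u) * (D₂ * x + 1) * (Φ * y * h) -
      (D₁ * y + u) * (D₂ * y + 1) * (Φ * x * h) = (x - y) * (D₁ * D₂ * x * y - u) * (Φ * h) := by
    ring
  rw [← sub_eq_zero, hfactor, mul_eq_zero, mul_eq_zero, sub_eq_zero, sub_eq_zero, eq_comm (a := D₁ * D₂ * x * y)]
  simp [hxy, hΦ, hh]

theorem wavenumber_sq_injective {L : ℝ} (hL : L ≠ 0) {j k : ℕ}
    (h : ((j : ℝ) * π / L) ^ 2 = ((k : ℝ) * π / L) ^ 2) : j = k := by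
  rw [div_pow, div_pow, div_left_inj' (pow_ne_zero 2 hL), mul_pow, mul_pow,
    mul_left_inj' (pow_ne_zero 2 pi_ne_zero), pow_left_inj₀ (Nat.cast_nonneg j)
      (Nat.cast_nonneg k) two_ne_zero] at h
  exact_mod_cast h

theorem stmt4_general (D₁ D₂ ubar L Φb hb : ℝ)
    (hL : 0 < L)
    (hΦb : 0 < Φb) (hhb : 0 < hb)
    (chi : ℕ → ℝ)
    (hchi : ∀ k : ℕ, chi k =
      (D₁ * ((k : ℝ) * π / L) ^ 2 + ubar) * (D₂ * ((k : ℝ) * π / L) ^ 2 + 1) /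
        (Φb * ((k : ℝ) * π / L) ^ 2 * hb)) :
    (∀ j k : ℕ, 0 < j → 0 < k → j ≠ k →
      (chi j = chi k ↔ ubar = (j : ℝ) ^ 2 * (k : ℝ) ^ 2 * D₁ * D₂ * (π / L) ^ 4)) ∧
    ((∀ j k : ℕ, 0 < j → 0 < k → j ≠ k → chi j ≠ chi k) ↔
      (∀ j k : ℕ, 0 < j → 0 < k → j ≠ k →
        ubar ≠ (j : ℝ) ^ 2 * (k : ℝ) ^ 2 * D₁ * D₂ * (π / L) ^ 4)) := by
  have key : ∀ j k : ℕ, 0 < j → 0 < k → j ≠ k →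
      (chi j = chi k ↔ ubar = (j : ℝ) ^ 2 * (k : ℝ) ^ 2 * D₁ * D₂ * (π / L) ^ 4) := by
    intro j k hj hk hjk
    have hjk' : ((j : ℝ) * π / L) ^ 2 ≠ ((k : ℝ) * π / L) ^ 2 :=
      mt (wavenumber_sq_injective hL.ne') hjk
    rw [hchi, hchi, div_eq_div_iff_eq_mul_mul hΦb.ne' hhb.ne' (by positivity) (by positivity) hjk']
    ring_nf
  exact ⟨key, forall₄_congr fun j k hj hk => forall_congr' fun hjk => not_congr (key j k hj hk hjk)⟩

/-- For distinct positive integers `j ≠ k`, `χ_j = χ_k` iff `ū = j²k²D₁D₂(π/L)⁴`;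
equivalently, the bifurcation values are pairwise distinct precisely when
`ū ≠ j²k²D₁D₂(π/L)⁴` for all positive integers `j ≠ k`. -/
theorem stmt4 (D₁ D₂ ubar L Φb hb : ℝ)
    (hD₁ : 0 < D₁) (hD₂ : 0 < D₂) (hubar : 0 < ubar) (hL : 0 < L)
    (hΦb : 0 < Φb) (hhb : 0 < hb)
    (chi : ℕ → ℝ)
    (hchi : ∀ k : ℕ, chi k =
      (D₁ * ((k : ℝ) * π / L) ^ 2 + ubar) * (D₂ * ((k : ℝ) * π / L) ^ 2 + 1) /
        (Φb * ((k : ℝ) * π / L) ^ 2 * hb)) :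
    (∀ j k : ℕ, 0 < j → 0 < k → j ≠ k →
      (chi j = chi k ↔ ubar = (j : ℝ) ^ 2 * (k : ℝ) ^ 2 * D₁ * D₂ * (π / L) ^ 4)) ∧
    ((∀ j k : ℕ, 0 < j → 0 < k → j ≠ k → chi j ≠ chi k) ↔
      (∀ j k : ℕ, 0 < j → 0 < k → j ≠ k →
        ubar ≠ (j : ℝ) ^ 2 * (k : ℝ) ^ 2 * D₁ * D₂ * (π / L) ^ 4)) :=
  stmt4_general D₁ D₂ ubar L Φb hb hL hΦb hhb chi hchi
end

section
/- Let k be a positive integer, ρ = kπ/L, t = D₂ρ², and define a = (14D₂ρ⁶ − ρ⁴)/ū², b = −(2D₂ρ⁴ + 5ρ²)/(2ū), c = 5D₂ρ² + 7/2, F(r) = ar² + br + c, and r₃ = (ū/(4D₂))(L/(kπ))⁴. Then F(r₃) = (80t³ + 52t² + 4t − 1)/(16t²), the cubic factors as 80t³ + 52t² + 4t − 1 = 80(t + 1/2)(t + 1/4)(t − 1/10), and consequently for D₂ > 0: F(r₃) > 0 if and only if D₂ > (1/10)(L/(kπ))², F(r₃) = 0 if and only if D₂ = (1/10)(L/(kπ))²,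 and F(r₃) < 0 if and only if D₂ < (1/10)(L/(kπ))². -/
open Real Set

/-! Since `r₃ = ū/(4D₂ρ⁴)`, the value `F(r₃)` depends on `t = D₂ρ²` alone. Of the three roots
of the cubic only `1/10` is positive, so `F(r₃)` is a positive multiple of `t − 1/10`, i.e. of
`D₂ − (1/10)ρ⁻²`, and `ρ⁻¹ = L/(kπ)`. -/

theorem cubic_eq_mul_sub_one_tenth (t : ℝ) :
    80 * t ^ 3 + 52 * t ^ 2 + 4 * t - 1 = 80 * (t + 1 / 2) * (t + 1 / 4) * (t - 1 / 10) := by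
  ring

theorem sign_of_eq_pos_mul_sub {x Q D θ : ℝ} (hQ : 0 < Q) (hx : x = Q * (D - θ)) :
    (0 < x ↔ θ < D) ∧ (x = 0 ↔ D = θ) ∧ (x < 0 ↔ D < θ) := by
  subst hx
  refine ⟨?_, ?_, ?_⟩
  · rw [mul_pos_iff_of_pos_left hQ, sub_pos]
  · rw [mul_eq_zero, sub_eq_zero, or_iff_right hQ.ne']
  · simpa using mul_lt_mul_iff_right₀ (b := D - θ) (c := 0) hQ

theorem quadratic_at_r₃ {D u ρ : ℝ} (hD : D ≠ 0) (hu : u ≠ 0) (hρ : ρ ≠ 0) :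
    (14 * D * ρ ^ 6 - ρ ^ 4) / u ^ 2 * (u / (4 * D) * ρ⁻¹ ^ 4) ^ 2
        + -(2 * D * ρ ^ 4 + 5 * ρ ^ 2) / (2 * u) * (u / (4 * D) * ρ⁻¹ ^ 4)
        + (5 * D * ρ ^ 2 + 7 / 2)
      = (80 * (D * ρ ^ 2) ^ 3 + 52 * (D * ρ ^ 2) ^ 2 + 4 * (D * ρ ^ 2) - 1)
          / (16 * (D * ρ ^ 2) ^ 2) := by
  field_simp
  ring

/-- Value of the quadratic `F` at `r₃`: with `t = D₂ρ²`,
`F(r₃) = (80t³ + 52t² + 4t − 1)/(16t²)`, the cubic factors as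
`80(t + 1/2)(t + 1/4)(t − 1/10)`, and the sign of `F(r₃)` is determined by the
position of `D₂` relative to `(1/10)(L/(kπ))²`. -/
theorem stmt16 (D₂ ubar L : ℝ)
    (hD₂ : 0 < D₂) (hubar : 0 < ubar) (hL : 0 < L)
    (k : ℕ) (hk : 0 < k)
    (ρ t a b c r₃ : ℝ) (F : ℝ → ℝ)
    (hρ : ρ = (k : ℝ) * π / L) (ht : t = D₂ * ρ ^ 2)
    (ha : a = (14 * D₂ * ρ ^ 6 - ρ ^ 4) / ubar ^ 2)
    (hb : b = -(2 * D₂ * ρ ^ 4 + 5 * ρ ^ 2) / (2 * ubar))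
    (hc : c = 5 * D₂ * ρ ^ 2 + 7 / 2)
    (hF : ∀ r : ℝ, F r = a * r ^ 2 + b * r + c)
    (hr₃ : r₃ = ubar / (4 * D₂) * (L / ((k : ℝ) * π)) ^ 4) :
    F r₃ = (80 * t ^ 3 + 52 * t ^ 2 + 4 * t - 1) / (16 * t ^ 2) ∧
    80 * t ^ 3 + 52 * t ^ 2 + 4 * t - 1
      = 80 * (t + 1 / 2) * (t + 1 / 4) * (t - 1 / 10) ∧
    (0 < F r₃ ↔ (1 / 10) * (L / ((k : ℝ) * π)) ^ 2 < D₂) ∧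
    (F r₃ = 0 ↔ D₂ = (1 / 10) * (L / ((k : ℝ) * π)) ^ 2) ∧
    (F r₃ < 0 ↔ D₂ < (1 / 10) * (L / ((k : ℝ) * π)) ^ 2) := by
  have hρ_pos : 0 < ρ := by rw [hρ]; have := pi_pos; positivity
  have hL_div : L / ((k : ℝ) * π) = ρ⁻¹ := by rw [hρ, inv_div]
  have hvalue : F r₃ = (80 * t ^ 3 + 52 * t ^ 2 + 4 * t - 1) / (16 * t ^ 2) := by
    rw [hF, ha, hb, hc, hr₃, hL_div, ht]
    exact quadratic_at_r₃ hD₂.ne' hubar.ne' hρ_pos.ne'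
  have hfactor := cubic_eq_mul_sub_one_tenth t
  have hsign : F r₃ = (80 * (t + 1 / 2) * (t + 1 / 4) / (16 * t ^ 2) * ρ ^ 2)
      * (D₂ - 1 / 10 * ρ⁻¹ ^ 2) := by
    rw [hvalue, hfactor, ht]
    field_simp
  have ht_pos : 0 < t := by rw [ht]; positivity
  rw [hL_div]
  exact ⟨hvalue, hfactor, sign_of_eq_pos_mul_sub (by positivity) hsign⟩
end

section
/- Let k be a positive integer and assume 0 < D₂ ≤ (1/14)(L/(kπ))². With ρ = kπ/L, define a = (14D₂ρ⁶ − ρ⁴)/ū², b = −(2D₂ρ⁴ + 5ρ²)/(2ū), c = 5D₂ρ² + 7/2, F(r) = ar² + br + c, and r₃ = (ū/(4D₂))(L/(kπ))⁴. Then F has a unique positive root r₂, and r₂ < r₃; moreover for D₁ > 0 with D₁ ≠ r₃: F(D₁)/(D₁ − r₃) > 0 if and only if r₂ < D₁ < r₃, and F(D₁)/(D₁ − r₃) < 0 if and only if D₁ ∈ (0, r₂) ∪ (r₃, ∞). -/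
open Real Set

/-!
With `m = D₂ρ²`, the hypothesis on `D₂` reads `m ≤ 1/14`, which makes the leading coefficient
`a = ρ⁴(14m − 1)/ū²` nonpositive; since `b < 0 < c`, `F` is then strictly decreasing on `[0, ∞)`
and positive at `0`. Evaluating at `r₃ = ū/(4D₂ρ⁴)` gives
`16m² F(r₃) = 80m³ + 52m² + 4m − 1 < 0` for `m ≤ 1/14`, so `F` has exactly one positive root
`r₂ ∈ (0, r₃)`, positive before it and negative after it. The sign of `F(D₁)/(D₁ − r₃)` is read
off from the signs of numerator and denominator.
-/

theorem strictAntiOn_quadratic {a b c : ℝ} (ha : a ≤ 0) (hb : b < 0) :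
    StrictAntiOn (fun r => a * r ^ 2 + b * r + c) (Ici 0) := by
  intro x (hx : 0 ≤ x) y _ hxy
  nlinarith [mul_nonpos_of_nonpos_of_nonneg ha (by linarith : (0 : ℝ) ≤ y + x)]

theorem StrictAntiOn.exists_root_of_pos_of_neg {f : ℝ → ℝ} {R : ℝ} (hR₀ : 0 ≤ R)
    (hf : StrictAntiOn f (Ici 0)) (hcont : ContinuousOn f (Icc 0 R))
    (h0 : 0 < f 0) (hR : f R < 0) :
    ∃ r₀ ∈ Ioo 0 R, f r₀ = 0 ∧
      ∀ r, 0 ≤ r → (0 < f r ↔ r < r₀) ∧ (f r < 0 ↔ r₀ < r) := by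
  obtain ⟨r₀, ⟨hr₀, hr₀R⟩, hfr₀⟩ := intermediate_value_Icc' hR₀ hcont ⟨hR.le, h0.le⟩
  have hsign : ∀ r, 0 ≤ r → (0 < f r ↔ r < r₀) ∧ (f r < 0 ↔ r₀ < r) := fun r hr => by
    rw [← hfr₀]
    exact ⟨hf.lt_iff_gt hr₀ hr, hf.lt_iff_gt hr hr₀⟩
  refine ⟨r₀, ⟨?_, ?_⟩, hfr₀, hsign⟩
  · exact (hsign 0 le_rfl).1.1 h0
  · exact (hsign R hR₀).2.1 hR

theorem div_sub_sign_iff {y r₂ r₃ x : ℝ} (h₂₃ : r₂ < r₃)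
    (hpos : 0 < y ↔ x < r₂) (hneg : y < 0 ↔ r₂ < x) :
    (0 < y / (x - r₃) ↔ r₂ < x ∧ x < r₃) ∧ (y / (x - r₃) < 0 ↔ x < r₂ ∨ r₃ < x) := by
  rw [div_pos_iff, div_neg_iff, hpos, hneg, sub_pos, sub_neg]
  grind

theorem pitchfork_quadratic_at_r₃_neg {D₂ ū ρ : ℝ} (hū : 0 < ū) (hρ : 0 < ρ) (hD₂ : 0 < D₂)
    (hm : D₂ * ρ ^ 2 ≤ 1 / 14) :
    (14 * D₂ * ρ ^ 6 - ρ ^ 4) / ū ^ 2 * (ū / (4 * D₂ * ρ ^ 4)) ^ 2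
      + -(2 * D₂ * ρ ^ 4 + 5 * ρ ^ 2) / (2 * ū) * (ū / (4 * D₂ * ρ ^ 4))
      + (5 * D₂ * ρ ^ 2 + 7 / 2) < 0 := by
  have hm₀ : 0 < D₂ * ρ ^ 2 := by positivity
  have key : (14 * D₂ * ρ ^ 6 - ρ ^ 4) / ū ^ 2 * (ū / (4 * D₂ * ρ ^ 4)) ^ 2
      + -(2 * D₂ * ρ ^ 4 + 5 * ρ ^ 2) / (2 * ū) * (ū / (4 * D₂ * ρ ^ 4))
      + (5 * D₂ * ρ ^ 2 + 7 / 2)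
      = (80 * (D₂ * ρ ^ 2) ^ 3 + 52 * (D₂ * ρ ^ 2) ^ 2 + 4 * (D₂ * ρ ^ 2) - 1)
        / (16 * (D₂ * ρ ^ 2) ^ 2) := by
    field_simp
    ring
  rw [key]
  apply div_neg_of_neg_of_pos _ (by positivity)
  nlinarith [mul_le_mul_of_nonneg_left hm hm₀.le, mul_le_mul_of_nonneg_left hm (sq_nonneg (D₂ * ρ ^ 2))]

/-- Case `0 < D₂ ≤ (1/14)(L/(kπ))²`: the quadratic `F` has a unique positive root `r₂`,
`r₂ < r₃`, and the sign of `F(D₁)/(D₁ − r₃)` (which equals the sign of the pitchfork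
coefficient `K₃`) is positive exactly on `(r₂, r₃)` and negative on `(0, r₂) ∪ (r₃, ∞)`. -/
theorem stmt18 (D₂ ubar L : ℝ)
    (hubar : 0 < ubar) (hL : 0 < L)
    (k : ℕ) (hk : 0 < k)
    (hD₂pos : 0 < D₂) (hD₂le : D₂ ≤ (1 / 14) * (L / ((k : ℝ) * π)) ^ 2)
    (ρ a b c r₃ : ℝ) (F : ℝ → ℝ)
    (hρ : ρ = (k : ℝ) * π / L)
    (ha : a = (14 * D₂ * ρ ^ 6 - ρ ^ 4) / ubar ^ 2)
    (hb : b = -(2 * D₂ * ρ ^ 4 + 5 * ρ ^ 2) / (2 * ubar))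
    (hc : c = 5 * D₂ * ρ ^ 2 + 7 / 2)
    (hF : ∀ r : ℝ, F r = a * r ^ 2 + b * r + c)
    (hr₃ : r₃ = ubar / (4 * D₂) * (L / ((k : ℝ) * π)) ^ 4) :
    ∃ r₂ : ℝ, 0 < r₂ ∧ F r₂ = 0 ∧ (∀ r : ℝ, 0 < r → F r = 0 → r = r₂) ∧
      r₂ < r₃ ∧
      ∀ D₁ : ℝ, 0 < D₁ → D₁ ≠ r₃ →
        ((0 < F D₁ / (D₁ - r₃) ↔ r₂ < D₁ ∧ D₁ < r₃) ∧
         (F D₁ / (D₁ - r₃) < 0 ↔ D₁ < r₂ ∨ r₃ < D₁)) := by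
  have hρ₀ : 0 < ρ := by
    have : (0 : ℝ) < k := by exact_mod_cast hk
    rw [hρ]; positivity
  have hLkπ : L / ((k : ℝ) * π) = ρ⁻¹ := by rw [hρ, inv_div]
  have hm : D₂ * ρ ^ 2 ≤ 1 / 14 := by
    rw [hLkπ, inv_pow, ← div_eq_mul_inv, le_div_iff₀ (by positivity)] at hD₂le
    exact hD₂le
  have hr₃' : r₃ = ubar / (4 * D₂ * ρ ^ 4) := by rw [hr₃, hLkπ]; field_simp
  have ha₀ : a ≤ 0 := by
    rw [ha]
    apply div_nonpos_of_nonpos_of_nonneg _ (sq_nonneg _)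
    nlinarith [mul_le_mul_of_nonneg_left hm (pow_pos hρ₀ 4).le]
  have hb₀ : b < 0 := by
    rw [hb, neg_div]
    exact neg_neg_of_pos (by positivity)
  have hc₀ : 0 < c := by rw [hc]; positivity
  have hFr₃ : F r₃ < 0 := by
    rw [hF, ha, hb, hc, hr₃']
    exact pitchfork_quadratic_at_r₃_neg hubar hρ₀ hD₂pos hm
  have hF' : F = fun r => a * r ^ 2 + b * r + c := funext hF
  have hanti : StrictAntiOn F (Ici 0) := hF' ▸ strictAntiOn_quadratic ha₀ hb₀
  obtain ⟨r₂, ⟨hr₂, hr₂₃⟩, hFr₂, hsign⟩ := hanti.exists_root_of_pos_of_neg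
    (by rw [hr₃']; positivity) (by rw [hF']; fun_prop) (by simpa [hF] using hc₀) hFr₃
  refine ⟨r₂, hr₂, hFr₂, fun r hr hFr => hanti.injOn hr.le hr₂.le (hFr.trans hFr₂.symm), hr₂₃,
    fun D₁ hD₁ _ => div_sub_sign_iff hr₂₃ (hsign D₁ hD₁.le).1 (hsign D₁ hD₁.le).2⟩
end

section
/- Let k be a positive integer and D₂ = (1/10)(L/(kπ))². With ρ = kπ/L, define a = (14D₂ρ⁶ − ρ⁴)/ū², b = −(2D₂ρ⁴ + 5ρ²)/(2ū), c = 5D₂ρ² + 7/2, F(r) = ar² + br + c, and r₃ = (ū/(4D₂))(L/(kπ))⁴. Then a = (2/5)ρ⁴/ū² > 0, r₃ = (5/2)ū(L/(kπ))², and F(r) = a(r − (5/2)ū(L/(kπ))²)(r − 4ū(L/(kπ))²); consequently for D₁ > 0 with D₁ ≠ r₃: F(D₁)/(D₁ − r₃) > 0 if and only if D₁ > 4ū(L/(kπ))², and F(D₁)/(D₁ − r₃) < 0 if and only if 0 < D₁ < 4ū(L/(kπ))² and D₁ ≠ r₃. -/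
open Real Set

/-! With `ℓ = L/(kπ)` and `ρ = ℓ⁻¹`, the choice `D₂ = ℓ²/10` makes `D₂ρ² = 1/10`, so the
coefficients of `F` collapse to `a = (2/5)ρ⁴/ū²`, `b = -(13/5)ρ²/ū`, `c = 4` and
`F = a(r − (5/2)ūℓ²)(r − 4ūℓ²)`. The first root is exactly `r₃`, so `F(D₁)/(D₁ − r₃) = a(D₁ − 4ūℓ²)`
has the sign of `D₁ − 4ūℓ²`. -/

lemma mul_sub_mul_sub_div_sub_cancel {a r₁ r₂ x : ℝ} (hx : x ≠ r₁) :
    a * (x - r₁) * (x - r₂) / (x - r₁) = a * (x - r₂) := by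
  rw [mul_right_comm, mul_div_cancel_right₀ _ (sub_ne_zero.mpr hx)]

namespace KellerSegel

variable {u ℓ : ℝ}

lemma leadingCoeff_eq (hℓ : ℓ ≠ 0) :
    (14 * (1 / 10 * ℓ ^ 2) * ℓ⁻¹ ^ 6 - ℓ⁻¹ ^ 4) / u ^ 2 = 2 / 5 * ℓ⁻¹ ^ 4 / u ^ 2 := by
  field_simp
  ring

lemma r₃_eq (hℓ : ℓ ≠ 0) : u / (4 * (1 / 10 * ℓ ^ 2)) * ℓ ^ 4 = 5 / 2 * u * ℓ ^ 2 := by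
  field_simp
  ring

lemma quadratic_factor (hu : u ≠ 0) (hℓ : ℓ ≠ 0) (r : ℝ) :
    2 / 5 * ℓ⁻¹ ^ 4 / u ^ 2 * r ^ 2
        + -(2 * (1 / 10 * ℓ ^ 2) * ℓ⁻¹ ^ 4 + 5 * ℓ⁻¹ ^ 2) / (2 * u) * r
        + (5 * (1 / 10 * ℓ ^ 2) * ℓ⁻¹ ^ 2 + 7 / 2)
      = 2 / 5 * ℓ⁻¹ ^ 4 / u ^ 2 * (r - 5 / 2 * u * ℓ ^ 2) * (r - 4 * u * ℓ ^ 2) := by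
  field_simp
  ring

end KellerSegel

open KellerSegel in
/-- Case `D₂ = (1/10)(L/(kπ))²`: then `a = (2/5)ρ⁴/ū² > 0`, `r₃ = (5/2)ū(L/(kπ))²`,
`F` factors as `a(r − (5/2)ū(L/(kπ))²)(r − 4ū(L/(kπ))²)`, and the sign of
`F(D₁)/(D₁ − r₃)` is positive iff `D₁ > 4ū(L/(kπ))²` and negative iff
`0 < D₁ < 4ū(L/(kπ))²` with `D₁ ≠ r₃`. -/
theorem stmt19 (D₂ ubar L : ℝ)
    (hubar : 0 < ubar) (hL : 0 < L)
    (k : ℕ) (hk : 0 < k)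
    (hD₂ : D₂ = (1 / 10) * (L / ((k : ℝ) * π)) ^ 2)
    (ρ a b c r₃ : ℝ) (F : ℝ → ℝ)
    (hρ : ρ = (k : ℝ) * π / L)
    (ha : a = (14 * D₂ * ρ ^ 6 - ρ ^ 4) / ubar ^ 2)
    (hb : b = -(2 * D₂ * ρ ^ 4 + 5 * ρ ^ 2) / (2 * ubar))
    (hc : c = 5 * D₂ * ρ ^ 2 + 7 / 2)
    (hF : ∀ r : ℝ, F r = a * r ^ 2 + b * r + c)
    (hr₃ : r₃ = ubar / (4 * D₂) * (L / ((k : ℝ) * π)) ^ 4) :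
    a = (2 / 5) * ρ ^ 4 / ubar ^ 2 ∧ 0 < a ∧
    r₃ = (5 / 2) * ubar * (L / ((k : ℝ) * π)) ^ 2 ∧
    (∀ r : ℝ, F r = a * (r - (5 / 2) * ubar * (L / ((k : ℝ) * π)) ^ 2) *
        (r - 4 * ubar * (L / ((k : ℝ) * π)) ^ 2)) ∧
    ∀ D₁ : ℝ, 0 < D₁ → D₁ ≠ r₃ →
      ((0 < F D₁ / (D₁ - r₃) ↔ 4 * ubar * (L / ((k : ℝ) * π)) ^ 2 < D₁) ∧
       (F D₁ / (D₁ - r₃) < 0 ↔ D₁ < 4 * ubar * (L / ((k : ℝ) * π)) ^ 2)) := by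
  set ℓ := L / ((k : ℝ) * π)
  have hℓ : 0 < ℓ := by positivity
  rw [← inv_div] at hρ
  subst hρ hD₂
  have ha' : a = 2 / 5 * ℓ⁻¹ ^ 4 / ubar ^ 2 := ha.trans (leadingCoeff_eq hℓ.ne')
  have ha_pos : 0 < a := by rw [ha']; positivity
  have hr₃' : r₃ = 5 / 2 * ubar * ℓ ^ 2 := hr₃.trans (r₃_eq hℓ.ne')
  have hF' : ∀ r, F r = a * (r - 5 / 2 * ubar * ℓ ^ 2) * (r - 4 * ubar * ℓ ^ 2) := fun r ↦ by
    rw [hF, ha', hb, hc, quadratic_factor hubar.ne' hℓ.ne']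
  refine ⟨ha', ha_pos, hr₃', hF', fun D₁ _ hD₁ ↦ ?_⟩
  rw [hF', ← hr₃', mul_sub_mul_sub_div_sub_cancel hD₁]
  constructor
  · rw [mul_pos_iff_of_pos_left ha_pos, sub_pos]
  · rw [← sub_neg (b := 4 * ubar * ℓ ^ 2)]
    simpa only [mul_zero] using
      mul_lt_mul_iff_of_pos_left ha_pos (b := D₁ - 4 * ubar * ℓ ^ 2) (c := 0)
end
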